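/- Let k, k′ > 0 and let σ : ℝ → ℂ be measurable. Let r_j′ = (x_j′, y_j′) (1 ≤ j ≤ M_s) be source points with strengths Q_j′ ∈ ℂ, let c = (x_c, y_c) be a target expansion center, and let r_i = (x_i, y_i) be a target point with (ρ_i, θ_i) the polar coordinates of r_i − c. Define the local expansion coefficients β_n = Σ_{j=1}^{M_s} Q_j′·(−1)^n·𝓘^{k′k}_{0n}(x_j′ − x_c, y_j′, y_c, σ). Assume that for each j and n the function λ ↦ 𝓔^{k′k}(x_j′ − x_c, y_j′, y_c)·ω(λ,k)^n·σ(λ) is integrable and that Σ_{n∈ℤ} |J_n(kρ_i)|·∫_ℝ |𝓔^{k′k}(x_j′ − x_c, y_j′, y_c)·ω(λ,k)^n·σ(λ)| dλ < ∞ for each j. Then the potential Φ⁺(r_i, σ) = Σ_{j=1}^{M_s} Q_j′·𝓘^{k′k}_{00}(x_j′ − x_i, y_j′, y_i, σ) admits the absolutely convergent local expansion Φ⁺(r_i, σ) = Σ_{n∈ℤ} β_n·J_n(kρ_i)·e^{inθ_i}. -/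

import Mathlib

open Complex MeasureTheory Filter

/-- The branch of the vertical wavenumber: κ(λ,k) = √(k²−λ²) if |λ| ≤ k,
and κ(λ,k) = i√(λ²−k²) if |λ| > k. -/
noncomputable def kappa (lam k : ℝ) : ℂ :=
  if |lam| ≤ k then ((Real.sqrt (k ^ 2 - lam ^ 2) : ℝ) : ℂ)
  else Complex.I * ((Real.sqrt (lam ^ 2 - k ^ 2) : ℝ) : ℂ)

/-- ω(λ,k) = (κ(λ,k) + iλ)/k. -/
noncomputable def omega (lam k : ℝ) : ℂ := (kappa lam k + Complex.I * (lam : ℂ)) / (k : ℂ)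

/-- The plane-wave kernel 𝓔^{kk′}(x, y, y′) = exp(iλx + iκ(λ,k)y − iκ(λ,k′)y′). -/
noncomputable def pwKernel (k k' lam x y y' : ℝ) : ℂ :=
  Complex.exp (Complex.I * (lam : ℂ) * (x : ℂ) + Complex.I * kappa lam k * (y : ℂ)
    - Complex.I * kappa lam k' * (y' : ℂ))

/-- Bessel function of the first kind of nonnegative integer order, via its power series. -/
noncomputable def besselJnat (n : ℕ) (z : ℂ) : ℂ :=
  ∑' m : ℕ, ((-1 : ℂ) ^ m / ((m.factorial : ℂ) * ((m + n).factorial : ℂ))) * (z / 2) ^ (2 * m + n)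

/-- Bessel function of the first kind of integer order, with J_{−n} = (−1)^n J_n. -/
noncomputable def besselJ (n : ℤ) (z : ℂ) : ℂ :=
  if 0 ≤ n then besselJnat n.toNat z else (-1 : ℂ) ^ ((-n).toNat) * besselJnat ((-n).toNat) z

/-- Integrand of the Sommerfeld-type integral 𝓘^{kk′}_{nm}. -/
noncomputable def sommerfeldIntegrand (k k' : ℝ) (n m : ℤ) (x y y' : ℝ) (σ : ℝ → ℂ)
    (lam : ℝ) : ℂ :=
  pwKernel k k' lam x y y' * (omega lam k) ^ n * (omega lam k') ^ m * σ lam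

/-- The Sommerfeld-type integral 𝓘^{kk′}_{nm}(x, y, y′, σ). -/
noncomputable def sommerfeld (k k' : ℝ) (n m : ℤ) (x y y' : ℝ) (σ : ℝ → ℂ) : ℂ :=
  ∫ lam : ℝ, sommerfeldIntegrand k k' n m x y y' σ lam

noncomputable def genF (z t : ℂ) (p : ℕ × ℕ) : ℂ :=
  (z * t / 2) ^ p.1 / (p.1.factorial : ℂ) * ((-(z / (2 * t))) ^ p.2 / (p.2.factorial : ℂ))

def pairEquiv : ℤ × ℕ ≃ ℕ × ℕ where
  toFun q := if 0 ≤ q.1 then (q.2 + q.1.toNat, q.2) else (q.2, q.2 + (-q.1).toNat)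
  invFun p := ((p.1 : ℤ) - (p.2 : ℤ), min p.1 p.2)
  left_inv := by
    rintro ⟨n, m⟩
    dsimp only
    split_ifs with h <;> simp only [Prod.mk.injEq] <;> constructor <;> omega
  right_inv := by
    rintro ⟨a, b⟩
    dsimp only
    split_ifs with h <;> simp only [Prod.mk.injEq] <;> constructor <;> omega

lemma summable_exp_norm (x : ℂ) : Summable fun a : ℕ => ‖x ^ a / (a.factorial : ℂ)‖ := by
  simpa [norm_div, norm_pow] using Real.summable_pow_div_factorial ‖x‖

lemma exp_eq_tsum' (x : ℂ) : Complex.exp x = ∑' a : ℕ, x ^ a / (a.factorial : ℂ) := by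
  rw [Complex.exp_eq_exp_ℂ, NormedSpace.exp_eq_tsum_div]

lemma summable_genF_norm (z t : ℂ) : Summable fun p : ℕ × ℕ => ‖genF z t p‖ := by
  have := (summable_exp_norm (z * t / 2)).mul_norm (summable_exp_norm (-(z / (2 * t))))
  simpa only [genF] using this

lemma exp_eq_tsum_genF (z t : ℂ) (ht : t ≠ 0) :
    Complex.exp (z / 2 * (t - t⁻¹)) = ∑' p : ℕ × ℕ, genF z t p := by
  have h : z / 2 * (t - t⁻¹) = z * t / 2 + -(z / (2 * t)) := by field_simp; ring
  rw [h, Complex.exp_add, exp_eq_tsum', exp_eq_tsum']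
  exact tsum_mul_tsum_of_summable_norm (summable_exp_norm _) (summable_exp_norm _)

lemma genF_fiber (z t : ℂ) (ht : t ≠ 0) (n : ℤ) :
    ∑' m : ℕ, genF z t (pairEquiv (n, m)) = besselJ n z * t ^ n := by
  rcases le_or_gt 0 n with h | h
  · set N := n.toNat with hNdef
    have hN : ((N : ℤ) : ℤ) = n := Int.toNat_of_nonneg h
    have hterm : ∀ m : ℕ, genF z t (pairEquiv (n, m))
        = ((-1 : ℂ) ^ m / ((m.factorial : ℂ) * ((m + N).factorial : ℂ)) * (z / 2) ^ (2 * m + N))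
          * t ^ n := by
      intro m
      have he : pairEquiv (n, m) = (m + N, m) := by simp [pairEquiv, h, hNdef]
      rw [he, show t ^ n = t ^ (N : ℤ) from by rw [hN], zpow_natCast]
      simp only [genF]
      have hm : (m.factorial : ℂ) ≠ 0 := Nat.cast_ne_zero.mpr (Nat.factorial_ne_zero m)
      have hmN : ((m + N).factorial : ℂ) ≠ 0 := Nat.cast_ne_zero.mpr (Nat.factorial_ne_zero (m+N))
      rw [neg_pow (z / (2 * t))]
      field_simp
      have htm : t ^ m * t⁻¹ ^ m = 1 := by rw [← mul_pow, mul_inv_cancel₀ ht, one_pow]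
      linear_combination (z ^ (m * 2) * z ^ N * t ^ N * (1 / 2) ^ (m * 2) * (1 / 2) ^ N) * htm
    rw [tsum_congr hterm, tsum_mul_right, besselJ, if_pos h]
    rfl
  · set N := (-n).toNat with hNdef
    have hN : ((N : ℤ) : ℤ) = -n := Int.toNat_of_nonneg (by omega)
    have htN : t ^ n = ((t ^ N)⁻¹ : ℂ) := by
      rw [← zpow_natCast t N, ← zpow_neg, hN, neg_neg]
    have hterm : ∀ m : ℕ, genF z t (pairEquiv (n, m))
        = ((-1 : ℂ) ^ m / ((m.factorial : ℂ) * ((m + N).factorial : ℂ)) * (z / 2) ^ (2 * m + N))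
          * ((-1 : ℂ) ^ N * t ^ n) := by
      intro m
      have he : pairEquiv (n, m) = (m, m + N) := by simp [pairEquiv, not_le.mpr h, hNdef]
      rw [he, htN]
      simp only [genF]
      have hm : (m.factorial : ℂ) ≠ 0 := Nat.cast_ne_zero.mpr (Nat.factorial_ne_zero m)
      have hmN : ((m + N).factorial : ℂ) ≠ 0 := Nat.cast_ne_zero.mpr (Nat.factorial_ne_zero (m+N))
      rw [neg_pow (z / (2 * t))]
      field_simp
      have htm : t ^ m * t⁻¹ ^ m = 1 := by rw [← mul_pow, mul_inv_cancel₀ ht, one_pow]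
      have htN' : t ^ N * t⁻¹ ^ N = 1 := by rw [← mul_pow, mul_inv_cancel₀ ht, one_pow]
      linear_combination (z ^ (m * 2) * z ^ N * (-1) ^ m * (-1) ^ N * (1 / 2) ^ (m * 2) * (1 / 2) ^ N) * (t ^ N * t⁻¹ ^ N) * htm + (z ^ (m * 2) * z ^ N * (-1) ^ m * (-1) ^ N * (1 / 2) ^ (m * 2) * (1 / 2) ^ N) * htN'
    rw [tsum_congr hterm, tsum_mul_right, besselJ, if_neg (not_le.mpr h)]
    rw [besselJnat]
    ring

lemma besselJ_summable_norm (z t : ℂ) (ht : t ≠ 0) :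
    Summable fun n : ℤ => ‖besselJ n z * t ^ n‖ := by
  have hnorm : Summable fun q : ℤ × ℕ => ‖genF z t (pairEquiv q)‖ :=
    (summable_genF_norm z t).comp_injective pairEquiv.injective
  have h1 : Summable fun n : ℤ => ∑' m : ℕ, ‖genF z t (pairEquiv (n, m))‖ := by
    exact hnorm.prod
  refine Summable.of_nonneg_of_le (fun n => norm_nonneg _) (fun n => ?_) h1
  rw [← genF_fiber z t ht n]
  exact norm_tsum_le_tsum_norm (hnorm.prod_factor n)

lemma besselJ_tsum (z t : ℂ) (ht : t ≠ 0) :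
    ∑' n : ℤ, besselJ n z * t ^ n = Complex.exp (z / 2 * (t - t⁻¹)) := by
  have hnorm : Summable fun q : ℤ × ℕ => ‖genF z t (pairEquiv q)‖ :=
    (summable_genF_norm z t).comp_injective pairEquiv.injective
  have hsum : Summable fun q : ℤ × ℕ => genF z t (pairEquiv q) := hnorm.of_norm
  calc ∑' n : ℤ, besselJ n z * t ^ n
      = ∑' (n : ℤ) (m : ℕ), genF z t (pairEquiv (n, m)) :=
        (tsum_congr fun n => (genF_fiber z t ht n).symm)
    _ = ∑' q : ℤ × ℕ, genF z t (pairEquiv q) := (Summable.tsum_prod hsum).symm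
    _ = ∑' p : ℕ × ℕ, genF z t p := pairEquiv.tsum_eq _
    _ = Complex.exp (z / 2 * (t - t⁻¹)) := (exp_eq_tsum_genF z t ht).symm

lemma kappa_sq (lam k : ℝ) (hk : 0 ≤ k) : kappa lam k ^ 2 = (k : ℂ) ^ 2 - (lam : ℂ) ^ 2 := by
  unfold kappa
  split_ifs with h
  · rw [← Complex.ofReal_pow, Real.sq_sqrt (by nlinarith [abs_nonneg lam, _root_.sq_abs lam])]
    push_cast; ring
  · have h2 : (0 : ℝ) ≤ lam ^ 2 - k ^ 2 := by
      push_neg at h; nlinarith [abs_nonneg lam, _root_.sq_abs lam]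
    rw [mul_pow, Complex.I_sq, ← Complex.ofReal_pow, Real.sq_sqrt h2]
    push_cast; ring

lemma omega_mul_conj (lam k : ℝ) (hk : 0 < k) :
    omega lam k * ((kappa lam k - Complex.I * (lam : ℂ)) / (k : ℂ)) = 1 := by
  have hκ := kappa_sq lam k hk.le
  have hk0 : (k : ℂ) ≠ 0 := Complex.ofReal_ne_zero.mpr hk.ne'
  unfold omega
  field_simp
  linear_combination hκ - (lam : ℂ) ^ 2 * Complex.I_sq

lemma omega_ne_zero (lam k : ℝ) (hk : 0 < k) : omega lam k ≠ 0 :=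
  left_ne_zero_of_mul_eq_one (omega_mul_conj lam k hk)

lemma pointwise_expand (k k' : ℝ) (hk : 0 < k) (σ : ℝ → ℂ)
    (xc yc xi yi ρi θi : ℝ)
    (hxi : xi - xc = ρi * Real.cos θi) (hyi : yi - yc = ρi * Real.sin θi)
    (xj yj lam : ℝ) :
    sommerfeldIntegrand k' k 0 0 (xj - xi) yj yi σ lam
      = ∑' n : ℤ, sommerfeldIntegrand k' k 0 n (xj - xc) yj yc σ lam
          * ((-1 : ℂ) ^ n * besselJ n ((k * ρi : ℝ) : ℂ)
              * Complex.exp (Complex.I * (n : ℂ) * (θi : ℂ))) := by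
  have hk0 : (k : ℂ) ≠ 0 := Complex.ofReal_ne_zero.mpr hk.ne'
  set κ := kappa lam k with hκdef
  set ω := omega lam k with hωdef
  set c : ℂ := ((Real.cos θi : ℝ) : ℂ) with hcdef
  set s : ℂ := ((Real.sin θi : ℝ) : ℂ) with hsdef
  set E : ℂ := Complex.exp ((θi : ℂ) * Complex.I) with hEdef
  have hEeq : E = c + s * Complex.I := by
    rw [hEdef, Complex.exp_mul_I, hcdef, hsdef, Complex.ofReal_cos, Complex.ofReal_sin]
  have hcs : s ^ 2 + c ^ 2 = 1 := by
    rw [hcdef, hsdef]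
    rw [Complex.ofReal_sin, Complex.ofReal_cos]
    exact Complex.sin_sq_add_cos_sq _
  have hωω' : ω * ((κ - Complex.I * (lam : ℂ)) / (k : ℂ)) = 1 := omega_mul_conj lam k hk
  set t : ℂ := -(ω * E) with htdef
  have ht : t ≠ 0 := by
    rw [htdef]
    exact neg_ne_zero.mpr (mul_ne_zero (omega_ne_zero lam k hk) (Complex.exp_ne_zero _))
  have htinv : t⁻¹ = -((κ - Complex.I * (lam : ℂ)) / (k : ℂ) * (c - s * Complex.I)) := by
    refine inv_eq_of_mul_eq_one_right ?_
    rw [htdef, hEeq]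
    have hEbar : (c + s * Complex.I) * (c - s * Complex.I) = 1 := by
      linear_combination hcs - s ^ 2 * Complex.I_sq
    linear_combination ((c + s * Complex.I) * (c - s * Complex.I)) * hωω' + hEbar
  have hx : (xi : ℂ) - (xc : ℂ) = (ρi : ℂ) * c := by
    rw [hcdef]; exact_mod_cast congrArg Complex.ofReal hxi
  have hy : (yi : ℂ) - (yc : ℂ) = (ρi : ℂ) * s := by
    rw [hsdef]; exact_mod_cast congrArg Complex.ofReal hyi
  have hzc : ((k * ρi : ℝ) : ℂ) = (k : ℂ) * (ρi : ℂ) := by push_cast; ring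
  have hω : ω = (κ + Complex.I * (lam : ℂ)) / (k : ℂ) := rfl
  have hexp : ((k * ρi : ℝ) : ℂ) / 2 * (t - t⁻¹)
      = -(Complex.I * (lam : ℂ) * ((xi : ℂ) - (xc : ℂ)))
        - Complex.I * κ * ((yi : ℂ) - (yc : ℂ)) := by
    rw [htinv, hx, hy, hzc, htdef, hEeq, hω]
    field_simp
    ring
  have hbessel : Complex.exp (-(Complex.I * (lam : ℂ) * ((xi : ℂ) - (xc : ℂ)))
        - Complex.I * κ * ((yi : ℂ) - (yc : ℂ)))
      = ∑' n : ℤ, besselJ n ((k * ρi : ℝ) : ℂ) * t ^ n := by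
    rw [besselJ_tsum _ t ht, hexp]
  have hsplit : pwKernel k' k lam (xj - xi) yj yi
      = pwKernel k' k lam (xj - xc) yj yc
        * Complex.exp (-(Complex.I * (lam : ℂ) * ((xi : ℂ) - (xc : ℂ)))
            - Complex.I * κ * ((yi : ℂ) - (yc : ℂ))) := by
    rw [pwKernel, pwKernel, ← Complex.exp_add]
    congr 1
    rw [← hκdef]
    push_cast
    ring
  have htpow : ∀ n : ℤ, t ^ n
      = (-1 : ℂ) ^ n * (ω ^ n * Complex.exp (Complex.I * (n : ℂ) * (θi : ℂ))) := by
    intro n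
    have hE : E ^ n = Complex.exp (Complex.I * (n : ℂ) * (θi : ℂ)) := by
      rw [hEdef, ← Complex.exp_int_mul]
      congr 1
      ring
    rw [htdef, show -(ω * E) = (-1) * (ω * E) by ring, mul_zpow, mul_zpow, hE]
  simp only [sommerfeldIntegrand, zpow_zero, mul_one, one_mul]
  rw [hsplit, hbessel, ← tsum_mul_left, ← tsum_mul_right]
  refine tsum_congr fun n => ?_
  rw [htpow n]
  ring

/-- local expansion (LE) of the layered-media potential
Φ⁺(r_i, σ) = Σ_j Q_j′ 𝓘^{k′k}_{00}(x_j′−x_i, y_j′, y_i, σ): with local coefficients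
β_n = Σ_j Q_j′ (−1)^n 𝓘^{k′k}_{0n}(x_j′−x_c, y_j′, y_c, σ), under the stated hypotheses,
Φ⁺(r_i, σ) = Σ_{n∈ℤ} β_n J_n(kρ_i) e^{inθ_i} with absolute convergence. -/
theorem potential_local_expansion
    (k k' : ℝ) (hk : 0 < k) (hk' : 0 < k') (σ : ℝ → ℂ) (hσ : Measurable σ)
    (Ms : ℕ) (Q : Fin Ms → ℂ) (x' y' : Fin Ms → ℝ)
    (xc yc xi yi ρi θi : ℝ)
    (hρi : 0 ≤ ρi)
    (hxi : xi - xc = ρi * Real.cos θi)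
    (hyi : yi - yc = ρi * Real.sin θi)
    (hint : ∀ j, ∀ n : ℤ, MeasureTheory.Integrable
      (sommerfeldIntegrand k' k 0 n (x' j - xc) (y' j) yc σ))
    (hsum : ∀ j, Summable (fun n : ℤ =>
      ‖besselJ n ((k * ρi : ℝ) : ℂ)‖
        * ∫ lam : ℝ, ‖sommerfeldIntegrand k' k 0 n (x' j - xc) (y' j) yc σ lam‖)) :
    Summable (fun n : ℤ =>
      ‖(∑ j, Q j * (-1 : ℂ) ^ n * sommerfeld k' k 0 n (x' j - xc) (y' j) yc σ)
        * besselJ n ((k * ρi : ℝ) : ℂ) * Complex.exp (Complex.I * (n : ℂ) * (θi : ℂ))‖) ∧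
    (∑ j, Q j * sommerfeld k' k 0 0 (x' j - xi) (y' j) yi σ)
      = ∑' n : ℤ, (∑ j, Q j * (-1 : ℂ) ^ n * sommerfeld k' k 0 n (x' j - xc) (y' j) yc σ)
          * besselJ n ((k * ρi : ℝ) : ℂ)
          * Complex.exp (Complex.I * (n : ℂ) * (θi : ℂ)) := by
  have hsum' : ∀ j, Summable (fun n : ℤ => ‖besselJ n ((k * ρi : ℝ) : ℂ)‖
      * ∫ lam : ℝ, ‖sommerfeldIntegrand k' k 0 n (x' j - xc) (y' j) yc σ lam‖) := by
    intro j
    exact hsum j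
  -- norms of coefficient factors
  have hneg1 : ∀ n : ℤ, ‖(-1 : ℂ) ^ n‖ = 1 := fun n => by
    rw [norm_zpow, norm_neg, norm_one, one_zpow]
  have hexp1 : ∀ n : ℤ, ‖Complex.exp (Complex.I * (n : ℂ) * (θi : ℂ))‖ = 1 := fun n => by
    rw [show Complex.I * (n : ℂ) * (θi : ℂ) = (((n : ℝ) * θi : ℝ) : ℂ) * Complex.I by
      push_cast; ring]
    exact Complex.norm_exp_ofReal_mul_I _
  -- the coefficient
  set cf : ℤ → ℂ := fun n => (-1 : ℂ) ^ n * besselJ n ((k * ρi : ℝ) : ℂ)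
      * Complex.exp (Complex.I * (n : ℂ) * (θi : ℂ)) with hcf
  have hcfnorm : ∀ n : ℤ, ‖cf n‖ = ‖besselJ n ((k * ρi : ℝ) : ℂ)‖ := fun n => by
    rw [hcf]
    simp only [norm_mul, hneg1 n, hexp1 n]
    ring
  -- integral of term norms
  have hgnorm : ∀ j (n : ℤ),
      (∫ lam : ℝ, ‖sommerfeldIntegrand k' k 0 n (x' j - xc) (y' j) yc σ lam * cf n‖)
      = ‖besselJ n ((k * ρi : ℝ) : ℂ)‖
        * ∫ lam : ℝ, ‖sommerfeldIntegrand k' k 0 n (x' j - xc) (y' j) yc σ lam‖ := by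
    intro j n
    simp only [norm_mul]
    rw [integral_mul_const, hcfnorm n]
    ring
  have hg_int : ∀ j (n : ℤ), Integrable
      (fun lam => sommerfeldIntegrand k' k 0 n (x' j - xc) (y' j) yc σ lam * cf n) :=
    fun j n => (hint j n).mul_const _
  -- interchange of integral and sum for each j
  have key_j : ∀ j, sommerfeld k' k 0 0 (x' j - xi) (y' j) yi σ
      = ∑' n : ℤ, sommerfeld k' k 0 n (x' j - xc) (y' j) yc σ * cf n := by
    intro j
    have hlt : (∑' n : ℤ, ∫⁻ lam : ℝ,
        ‖sommerfeldIntegrand k' k 0 n (x' j - xc) (y' j) yc σ lam * cf n‖ₑ) ≠ ⊤ := by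
      have heq : ∀ n : ℤ, (∫⁻ lam : ℝ,
          ‖sommerfeldIntegrand k' k 0 n (x' j - xc) (y' j) yc σ lam * cf n‖ₑ)
          = ENNReal.ofReal (‖besselJ n ((k * ρi : ℝ) : ℂ)‖
            * ∫ lam : ℝ, ‖sommerfeldIntegrand k' k 0 n (x' j - xc) (y' j) yc σ lam‖) := by
        intro n
        rw [← hgnorm j n, MeasureTheory.ofReal_integral_norm_eq_lintegral_enorm (hg_int j n)]
      rw [tsum_congr heq, ← ENNReal.ofReal_tsum_of_nonneg (fun n => by positivity) (hsum' j)]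
      exact ENNReal.ofReal_ne_top
    calc sommerfeld k' k 0 0 (x' j - xi) (y' j) yi σ
        = ∫ lam : ℝ, ∑' n : ℤ,
            sommerfeldIntegrand k' k 0 n (x' j - xc) (y' j) yc σ lam * cf n := by
          rw [sommerfeld]
          refine integral_congr_ae (Filter.Eventually.of_forall fun lam => ?_)
          exact pointwise_expand k k' hk σ xc yc xi yi ρi θi hxi hyi (x' j) (y' j) lam
      _ = ∑' n : ℤ, ∫ lam : ℝ,
            sommerfeldIntegrand k' k 0 n (x' j - xc) (y' j) yc σ lam * cf n :=
          integral_tsum (fun n => (hg_int j n).aestronglyMeasurable) hlt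
      _ = ∑' n : ℤ, sommerfeld k' k 0 n (x' j - xc) (y' j) yc σ * cf n := by
          refine tsum_congr fun n => ?_
          rw [sommerfeld, integral_mul_const]
  -- summability of the j-th series of integrals (with Q weight)
  have hsummand : ∀ j, Summable (fun n : ℤ =>
      Q j * (sommerfeld k' k 0 n (x' j - xc) (y' j) yc σ * cf n)) := by
    intro j
    refine Summable.of_norm_bounded (((hsum' j).mul_left ‖Q j‖)) fun n => ?_
    rw [norm_mul, norm_mul, hcfnorm n]
    have hb : ‖sommerfeld k' k 0 n (x' j - xc) (y' j) yc σ‖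
        ≤ ∫ lam : ℝ, ‖sommerfeldIntegrand k' k 0 n (x' j - xc) (y' j) yc σ lam‖ :=
      norm_integral_le_integral_norm _
    calc ‖Q j‖ * (‖sommerfeld k' k 0 n (x' j - xc) (y' j) yc σ‖
          * ‖besselJ n ((k * ρi : ℝ) : ℂ)‖)
        ≤ ‖Q j‖ * ((∫ lam : ℝ, ‖sommerfeldIntegrand k' k 0 n (x' j - xc) (y' j) yc σ lam‖)
          * ‖besselJ n ((k * ρi : ℝ) : ℂ)‖) := by
          gcongr
      _ = ‖Q j‖ * (‖besselJ n ((k * ρi : ℝ) : ℂ)‖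
          * ∫ lam : ℝ, ‖sommerfeldIntegrand k' k 0 n (x' j - xc) (y' j) yc σ lam‖) := by ring
  constructor
  · -- summability of the full series
    have hbound : Summable (fun n : ℤ => ∑ j, ‖Q j‖ * (‖besselJ n ((k * ρi : ℝ) : ℂ)‖
        * ∫ lam : ℝ, ‖sommerfeldIntegrand k' k 0 n (x' j - xc) (y' j) yc σ lam‖)) :=
      summable_sum fun j _ => (hsum' j).mul_left ‖Q j‖
    refine Summable.of_nonneg_of_le (fun n => norm_nonneg _) (fun n => ?_) hbound
    rw [norm_mul, norm_mul, hexp1 n, mul_one]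
    calc ‖∑ j, Q j * (-1 : ℂ) ^ n * sommerfeld k' k 0 n (x' j - xc) (y' j) yc σ‖
          * ‖besselJ n ((k * ρi : ℝ) : ℂ)‖
        ≤ (∑ j, ‖Q j * (-1 : ℂ) ^ n * sommerfeld k' k 0 n (x' j - xc) (y' j) yc σ‖)
          * ‖besselJ n ((k * ρi : ℝ) : ℂ)‖ := by
          gcongr
          exact norm_sum_le _ _
      _ ≤ ∑ j, ‖Q j‖ * (‖besselJ n ((k * ρi : ℝ) : ℂ)‖
          * ∫ lam : ℝ, ‖sommerfeldIntegrand k' k 0 n (x' j - xc) (y' j) yc σ lam‖) := by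
          rw [Finset.sum_mul]
          refine Finset.sum_le_sum fun j _ => ?_
          rw [norm_mul, norm_mul, hneg1 n, mul_one]
          have hb : ‖sommerfeld k' k 0 n (x' j - xc) (y' j) yc σ‖
              ≤ ∫ lam : ℝ, ‖sommerfeldIntegrand k' k 0 n (x' j - xc) (y' j) yc σ lam‖ :=
            norm_integral_le_integral_norm _
          calc ‖Q j‖ * ‖sommerfeld k' k 0 n (x' j - xc) (y' j) yc σ‖
              * ‖besselJ n ((k * ρi : ℝ) : ℂ)‖
              ≤ ‖Q j‖ * (∫ lam : ℝ, ‖sommerfeldIntegrand k' k 0 n (x' j - xc) (y' j) yc σ lam‖)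
                * ‖besselJ n ((k * ρi : ℝ) : ℂ)‖ := by gcongr
            _ = ‖Q j‖ * (‖besselJ n ((k * ρi : ℝ) : ℂ)‖
                * ∫ lam : ℝ, ‖sommerfeldIntegrand k' k 0 n (x' j - xc) (y' j) yc σ lam‖) := by
                ring
  · -- the expansion identity
    calc (∑ j, Q j * sommerfeld k' k 0 0 (x' j - xi) (y' j) yi σ)
        = ∑ j, ∑' n : ℤ, Q j * (sommerfeld k' k 0 n (x' j - xc) (y' j) yc σ * cf n) := by
          refine Finset.sum_congr rfl fun j _ => ?_
          rw [key_j j, ← tsum_mul_left]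
      _ = ∑' n : ℤ, ∑ j, Q j * (sommerfeld k' k 0 n (x' j - xc) (y' j) yc σ * cf n) :=
          (Summable.tsum_finsetSum fun j _ => hsummand j).symm
      _ = ∑' n : ℤ, (∑ j, Q j * (-1 : ℂ) ^ n * sommerfeld k' k 0 n (x' j - xc) (y' j) yc σ)
          * besselJ n ((k * ρi : ℝ) : ℂ) * Complex.exp (Complex.I * (n : ℂ) * (θi : ℂ)) := by
          refine tsum_congr fun n => ?_
          rw [Finset.sum_mul, Finset.sum_mul]
          refine Finset.sum_congr rfl fun j _ => ?_
          rw [hcf]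
          ring
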